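/- Let p ≠ 5 be an odd prime with p ≢ 1 (mod 5), and let M denote the number of tuples (x_1, x_2, x_3, x_4, x_5) ∈ F_p^5, not all zero, satisfying x_1^5 + x_2^5 + x_3^5 + x_4^5 + x_5^5 = 5·x_1x_2x_3x_4x_5 (so that the number of points on this quintic threefold in P^4(F_p) is M/(p−1)). Then, as complex numbers, M = (p−1)·(p^3 + p^2 + p + 1) + 1 + (1/p)·Σ_{χ ≠ ε} g(χ)^5·g((χ^5)^{−1})·(χ(−5))^5, where the sum runs over all nontrivial multiplicative characters χ of F_p. -/

import Mathlib

/-!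
Writing `f x = ∑ xᵢⁿ - c ∏ xᵢ`, orthogonality of additive characters gives
`q · #{f = 0} = ∑_t ∑_x θ (t f x)`, and the term `t = 0` is `qⁿ`. For `t ≠ 0` one expands
`θ (-c t ∏ xᵢ)` over the multiplicative characters, `(q - 1) θ w = ∑_χ χ⁻¹ w g(χ)` on `Fˣ`, which
makes the sum over `x` factor into `n`-th powers of `∑_y χ y θ (t yⁿ)`. As `y ↦ yⁿ` is a
bijection of `F`, writing `χ = ψⁿ` turns such a sum into the Gauss sum `ψ⁻¹ t g(ψ)`; the
dependence on `t` then cancels, leaving the character sum of the theorem, while the points with a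
vanishing coordinate contribute `-(-1)ⁿ` for each `t ≠ 0`.
-/

open Finset Function MulChar

lemma AddChar.map_sum_eq_prod {A M ι : Type*} [AddCommMonoid A] [CommMonoid M]
    (ψ : AddChar A M) (s : Finset ι) (f : ι → A) : ψ (∑ i ∈ s, f i) = ∏ i ∈ s, ψ (f i) := by
  classical
  induction s using Finset.induction_on with
  | empty => simp
  | insert i s hi ih => rw [sum_insert hi, prod_insert hi, ψ.map_add_eq_mul, ih]

lemma ne_zero_of_bijective_pow {M : Type*} [MonoidWithZero M] [Nontrivial M] {n : ℕ}
    (hn : Bijective fun x : M => x ^ n) : n ≠ 0 := by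
  rintro rfl
  exact zero_ne_one (hn.1 (a₁ := 0) (a₂ := 1) (by simp))

lemma MulChar.pow_apply_eq_apply_pow {M R : Type*} [CommMonoid M] [CommMonoidWithZero R]
    (χ : MulChar M R) {n : ℕ} (hn : n ≠ 0) (a : M) : (χ ^ n) a = χ (a ^ n) := by
  rw [pow_apply' χ hn, map_pow]

lemma Nat.card_subtype_ne_and_add_one {α : Type*} [Finite α] {P : α → Prop} {a : α} (ha : P a) :
    Nat.card {x // x ≠ a ∧ P x} + 1 = Nat.card {x // P x} := by
  change _ = Nat.card ({x | P x} : Set α)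
  rw [Nat.card_coe_set_eq,
    ← Set.ncard_sdiff_singleton_add_one (s := {x | P x}) ha (Set.toFinite _), ← Nat.card_coe_set_eq]
  exact congrArg (· + 1) (Nat.card_congr (Equiv.subtypeEquivRight fun x => by simp [and_comm]))

section FiniteField

variable {F : Type*} [Field F] {n : ℕ}

def dwork (n : ℕ) (c : F) (x : Fin n → F) : F := ∑ i, x i ^ n - c * ∏ i, x i

lemma MulChar.pow_injective_of_bijective_pow {R : Type*} [CommRing R]
    (hn : Bijective fun x : F => x ^ n) : Injective fun χ : MulChar F R => χ ^ n := by
  intro χ φ (h : χ ^ n = φ ^ n)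
  ext a
  obtain ⟨y, hy : y ^ n = a⟩ := hn.2 a
  have hn0 := ne_zero_of_bijective_pow hn
  rw [← hy, ← pow_apply_eq_apply_pow _ hn0, h, pow_apply_eq_apply_pow _ hn0]

variable [Fintype F]

theorem FiniteField.pow_bijective_of_coprime (hn : n ≠ 0)
    (hcop : (Fintype.card F - 1).Coprime n) : Bijective fun x : F => x ^ n := by
  refine Finite.injective_iff_bijective.mp fun x y (hxy : x ^ n = y ^ n) => ?_
  rcases eq_or_ne y 0 with rfl | hy
  · simpa [zero_pow hn, hn] using hxy
  have hx : x ≠ 0 := by rintro rfl; exact pow_ne_zero n hy (by simpa [zero_pow hn] using hxy.symm)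
  have h : (x / y) ^ (Fintype.card F - 1).gcd n = 1 :=
    pow_gcd_eq_one.mpr ⟨FiniteField.pow_card_sub_one_eq_one _ (div_ne_zero hx hy),
      by rw [div_pow, hxy, div_self (pow_ne_zero n hy)]⟩
  rwa [hcop, pow_one, div_eq_one_iff_eq hy] at h

lemma gaussSum_mulShift_eq_sum_pow {R : Type*} [CommRing R] (hn : Bijective fun x : F => x ^ n)
    (ψ : MulChar F R) (θ : AddChar F R) (t : F) :
    gaussSum ψ (θ.mulShift t) = ∑ y, (ψ ^ n) y * θ (t * y ^ n) := by
  simp only [pow_apply_eq_apply_pow _ (ne_zero_of_bijective_pow hn), gaussSum,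
    AddChar.mulShift_apply]
  exact (Fintype.sum_bijective _ hn _ _ fun _ => rfl).symm

lemma sum_mulChar_mul_prod_mul_addChar {R : Type*} [CommRing R] (χ : MulChar F R)
    (θ : AddChar F R) (m : ℕ) (a t : F) :
    ∑ x : Fin m → F, χ (a * ∏ i, x i) * θ (t * ∑ i, x i ^ n) =
      χ a * (∑ y, χ y * θ (t * y ^ n)) ^ m := by
  simp only [map_mul, map_prod, mul_sum, AddChar.map_sum_eq_prod, mul_assoc, ← prod_mul_distrib]
  rw [← mul_sum, ← Fintype.prod_sum fun (_ : Fin m) y => χ y * θ (t * y ^ n), prod_const,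
    card_univ, Fintype.card_fin]

lemma sum_addChar_mul_sum_pow_eq_zero {R : Type*} [CommRing R] [IsDomain R]
    (hn : Bijective fun x : F => x ^ n) {θ : AddChar F R} {t : F} (hθt : θ.mulShift t ≠ 1) :
    ∑ x : Fin n → F, θ (t * ∑ i, x i ^ n) = 0 := by
  have hzero : ∑ y, θ (t * y ^ n) = 0 := by
    rw [← AddChar.sum_eq_zero_of_ne_one hθt]
    exact Fintype.sum_bijective _ hn _ _ fun _ => rfl
  simp only [mul_sum, AddChar.map_sum_eq_prod]
  rw [← Fintype.prod_sum fun (_ : Fin n) y => θ (t * y ^ n), hzero, prod_const, card_univ,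
    Fintype.card_fin, zero_pow (ne_zero_of_bijective_pow hn)]

lemma sum_one_mul_prod_mul_addChar {R : Type*} [CommRing R] [IsDomain R]
    (hn : Bijective fun x : F => x ^ n) {θ : AddChar F R} {a t : F} (ha : a ≠ 0)
    (hθt : θ.mulShift t ≠ 1) :
    ∑ x : Fin n → F, (1 : MulChar F R) (a * ∏ i, x i) * θ (t * ∑ i, x i ^ n) = (-1) ^ n := by
  rw [sum_mulChar_mul_prod_mul_addChar, ← one_pow n, ← gaussSum_mulShift_eq_sum_pow hn, one_pow,
    gaussSum_one_left hθt, one_apply (isUnit_iff_ne_zero.mpr ha), one_mul]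

lemma card_mul_natCard_zeros_eq_sum_addChar {α : Type*} [Fintype α] {θ : AddChar F ℂ}
    (hθ : θ ≠ 1) (f : α → F) :
    (Fintype.card F : ℂ) * Nat.card {x // f x = 0} = ∑ t, ∑ x, θ (t * f x) := by
  classical
  rw [Nat.card_eq_fintype_card, Fintype.card_subtype, sum_comm]
  simp [AddChar.sum_mulShift _ (AddChar.IsPrimitive.of_ne_one hθ), sum_ite, mul_comm]

variable [Fintype (MulChar F ℂ)]

lemma MulChar.card_eq_card_sub_one : (Fintype.card (MulChar F ℂ) : ℂ) = Fintype.card F - 1 := by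
  classical
  rw [← Nat.card_eq_fintype_card, MulChar.card_eq_card_units_of_hasEnoughRootsOfUnity,
    Nat.card_eq_fintype_card, Fintype.card_units, Nat.cast_pred Fintype.card_pos]

lemma MulChar.sum_characters_eq_zero {a : F} (ha : a ≠ 1) : ∑ χ : MulChar F ℂ, χ a = 0 := by
  obtain ⟨χ, hχ⟩ := MulChar.exists_apply_ne_one_of_hasEnoughRootsOfUnity F ℂ ha
  refine eq_zero_of_mul_eq_self_left hχ ?_
  simp only [mul_sum, ← MulChar.mul_apply]
  exact Fintype.sum_bijective _ (Group.mulLeft_bijective χ) _ _ fun _ ↦ rfl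

lemma sum_inv_apply_mul_gaussSum (θ : AddChar F ℂ) (w : F) :
    ∑ χ : MulChar F ℂ, χ⁻¹ w * gaussSum χ θ =
      ((Fintype.card F : ℂ) - 1) * ((1 : MulChar F ℂ) w * θ w) := by
  rcases eq_or_ne w 0 with rfl | hw
  · simp
  calc ∑ χ : MulChar F ℂ, χ⁻¹ w * gaussSum χ θ
      = ∑ x, (∑ χ : MulChar F ℂ, χ (w⁻¹ * x)) * θ x := by
        simp only [gaussSum, mul_sum, sum_mul, MulChar.inv_apply', map_mul, mul_assoc]
        exact sum_comm
    _ = (∑ χ : MulChar F ℂ, χ 1) * θ w := by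
        refine (Fintype.sum_eq_single w fun x hx => ?_).trans (by rw [inv_mul_cancel₀ hw])
        rw [sum_characters_eq_zero (by rwa [Ne, inv_mul_eq_one₀ hw, eq_comm]), zero_mul]
    _ = _ := by
        simp [← card_eq_card_sub_one, one_apply (isUnit_iff_ne_zero.mpr hw)]

lemma sum_gaussSum_mul_inv_apply_mul_sum_pow (hn : Bijective fun x : F => x ^ n)
    (θ : AddChar F ℂ) {c t : F} (ht : t ≠ 0) :
    ∑ χ : MulChar F ℂ, gaussSum χ θ * (χ⁻¹ (-(c * t)) * (∑ y, χ⁻¹ y * θ (t * y ^ n)) ^ n) =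
      ∑ ψ : MulChar F ℂ, gaussSum ψ θ ^ n * gaussSum (ψ ^ n)⁻¹ θ * ψ (-c) ^ n := by
  have hbij : Bijective fun ψ : MulChar F ℂ => (ψ ^ n)⁻¹ :=
    Finite.injective_iff_bijective.mp (inv_injective.comp (pow_injective_of_bijective_pow hn))
  refine (Fintype.sum_bijective _ hbij _ _ fun ψ => ?_).symm
  have hψt : ψ⁻¹ t * ψ t = 1 := by rw [inv_apply', ← map_mul, inv_mul_cancel₀ ht, map_one]
  have hgauss := gaussSum_mulShift_eq ψ θ (Units.mk0 t ht)
  rw [Units.val_mk0] at hgauss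
  rw [inv_inv, ← gaussSum_mulShift_eq_sum_pow hn, hgauss,
    pow_apply' _ (ne_zero_of_bijective_pow hn), neg_mul_eq_neg_mul, map_mul]
  linear_combination (-(gaussSum ψ θ ^ n * gaussSum (ψ ^ n)⁻¹ θ * ψ (-c) ^ n)) *
    congrArg (· ^ n) hψt

theorem sum_addChar_mul_dwork (hn : Bijective fun x : F => x ^ n) {θ : AddChar F ℂ}
    (hθ : θ ≠ 1) {c t : F} (hc : c ≠ 0) (ht : t ≠ 0) :
    ((Fintype.card F : ℂ) - 1) * ∑ x, θ (t * dwork n c x) =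
      -((Fintype.card F : ℂ) - 1) * (-1) ^ n +
        ∑ ψ : MulChar F ℂ, gaussSum ψ θ ^ n * gaussSum (ψ ^ n)⁻¹ θ * ψ (-c) ^ n := by
  set q1 : ℂ := (Fintype.card F : ℂ) - 1
  have hθt : θ.mulShift t ≠ 1 := AddChar.IsPrimitive.of_ne_one hθ ht
  have hsplit (x : Fin n → F) :
      θ (t * dwork n c x) = θ (-(c * t) * ∏ i, x i) * θ (t * ∑ i, x i ^ n) := by
    rw [← θ.map_add_eq_mul, dwork]
    ring_nf
  -- `1 - (1 : MulChar F ℂ) w` is the indicator of `w = 0`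
  have hinv (w : F) :
      q1 * θ w = q1 * (1 - (1 : MulChar F ℂ) w) + ∑ χ : MulChar F ℂ, χ⁻¹ w * gaussSum χ θ := by
    rw [sum_inv_apply_mul_gaussSum]
    rcases eq_or_ne w 0 with rfl | hw
    · simp [q1]
    · simp [q1, one_apply (isUnit_iff_ne_zero.mpr hw)]
  calc q1 * ∑ x, θ (t * dwork n c x)
      = ∑ x : Fin n → F, (q1 * (1 - (1 : MulChar F ℂ) (-(c * t) * ∏ i, x i)) +
          ∑ χ : MulChar F ℂ, χ⁻¹ (-(c * t) * ∏ i, x i) * gaussSum χ θ) *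
            θ (t * ∑ i, x i ^ n) := by
        simp only [mul_sum, hsplit, ← mul_assoc, hinv]
    _ = q1 * (∑ x : Fin n → F, θ (t * ∑ i, x i ^ n) -
          ∑ x : Fin n → F, (1 : MulChar F ℂ) (-(c * t) * ∏ i, x i) * θ (t * ∑ i, x i ^ n)) +
        ∑ χ : MulChar F ℂ, gaussSum χ θ * ∑ x : Fin n → F,
          χ⁻¹ (-(c * t) * ∏ i, x i) * θ (t * ∑ i, x i ^ n) := by
        simp only [add_mul, sum_add_distrib, sub_mul, one_mul, mul_sub, sum_sub_distrib, mul_sum,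
          sum_mul, mul_assoc]
        rw [sum_comm]
        simp only [mul_left_comm]
    _ = -q1 * (-1) ^ n + ∑ χ : MulChar F ℂ,
          gaussSum χ θ * (χ⁻¹ (-(c * t)) * (∑ y, χ⁻¹ y * θ (t * y ^ n)) ^ n) := by
        have hct : -(c * t) ≠ 0 := neg_ne_zero.mpr (mul_ne_zero hc ht)
        simp only [sum_addChar_mul_sum_pow_eq_zero hn hθt, sum_one_mul_prod_mul_addChar hn hct hθt,
          sum_mulChar_mul_prod_mul_addChar]
        ring
    _ = _ := by rw [sum_gaussSum_mul_inv_apply_mul_sum_pow hn θ ht]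

theorem card_mul_natCard_dwork_zeros (hn : Bijective fun x : F => x ^ n) {θ : AddChar F ℂ}
    (hθ : θ ≠ 1) {c : F} (hc : c ≠ 0) :
    (Fintype.card F : ℂ) * Nat.card {x : Fin n → F // dwork n c x = 0} =
      (Fintype.card F : ℂ) ^ n - ((Fintype.card F : ℂ) - 1) * (-1) ^ n +
        ∑ ψ : MulChar F ℂ, gaussSum ψ θ ^ n * gaussSum (ψ ^ n)⁻¹ θ * ψ (-c) ^ n := by
  classical
  have hq1 : (Fintype.card F : ℂ) - 1 ≠ 0 :=
    sub_ne_zero.mpr (by exact_mod_cast Fintype.one_lt_card.ne')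
  have hcard : (#({0}ᶜ : Finset F) : ℂ) = (Fintype.card F : ℂ) - 1 := by
    rw [card_compl, card_singleton, Nat.cast_pred Fintype.card_pos]
  have hunits : ((Fintype.card F : ℂ) - 1) * ∑ t ∈ ({0}ᶜ : Finset F), ∑ x, θ (t * dwork n c x) =
      ((Fintype.card F : ℂ) - 1) * (-((Fintype.card F : ℂ) - 1) * (-1) ^ n +
        ∑ ψ : MulChar F ℂ, gaussSum ψ θ ^ n * gaussSum (ψ ^ n)⁻¹ θ * ψ (-c) ^ n) := by
    rw [mul_sum, sum_congr rfl fun t ht => sum_addChar_mul_dwork hn hθ hc (by simpa using ht),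
      sum_const, nsmul_eq_mul, hcard]
  rw [card_mul_natCard_zeros_eq_sum_addChar hθ, Fintype.sum_eq_add_sum_compl 0,
    mul_left_cancel₀ hq1 hunits]
  simp only [zero_mul, AddChar.map_zero_eq_one, sum_const, card_univ, Fintype.card_pi, prod_const,
    Fintype.card_fin, nsmul_eq_mul, Nat.cast_pow, mul_one]
  ring

end FiniteField

open scoped Classical in
theorem card_quintic_not_one_mod_five_general (p : ℕ) [Fact p.Prime] (hp5 : p ≠ 5)
    (hp : p % 5 ≠ 1) [Fintype (MulChar (ZMod p) ℂ)]
    (θ : AddChar (ZMod p) ℂ) (hθ : θ ≠ 1) :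
    (Fintype.card {x : Fin 5 → ZMod p //
        x ≠ 0 ∧ ∑ i, (x i) ^ 5 = 5 * ∏ i, x i} : ℂ) =
      ((p : ℂ) - 1) * ((p : ℂ) ^ 3 + (p : ℂ) ^ 2 + (p : ℂ) + 1) + 1 +
        (1 / (p : ℂ)) *
          ∑ χ ∈ Finset.univ.filter (fun χ : MulChar (ZMod p) ℂ => χ ≠ 1),
            gaussSum χ θ ^ 5 * gaussSum (χ ^ 5)⁻¹ θ * (χ (-5)) ^ 5 := by
  have hpos : 2 ≤ p := (Fact.out : p.Prime).two_le
  have hn : Bijective fun x : ZMod p => x ^ 5 :=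
    FiniteField.pow_bijective_of_coprime (by norm_num) <| by
      rw [ZMod.card]
      exact Nat.coprime_comm.mp ((Nat.Prime.coprime_iff_not_dvd Nat.prime_five).mpr (by omega))
  have hc : (5 : ZMod p) ≠ 0 := by
    rw [Ne, ← Nat.cast_ofNat, ZMod.natCast_eq_zero_iff]
    exact fun h => hp5 ((Nat.prime_dvd_prime_iff_eq Fact.out Nat.prime_five).mp h)
  have hcount := card_mul_natCard_dwork_zeros hn hθ hc
  have hzeros : Nat.card {x : Fin 5 → ZMod p // x ≠ 0 ∧ ∑ i, (x i) ^ 5 = 5 * ∏ i, x i} + 1 =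
      Nat.card {x : Fin 5 → ZMod p // dwork 5 5 x = 0} := by
    simp only [dwork, sub_eq_zero]
    exact Nat.card_subtype_ne_and_add_one (by simp)
  rw [← Finset.add_sum_erase _ _ (mem_univ 1), ← hzeros, ZMod.card] at hcount
  rw [Finset.filter_ne', ← Nat.card_eq_fintype_card]
  simp only [one_pow, inv_one, gaussSum_one_left hθ, one_apply hc.isUnit.neg] at hcount
  have hp0 : (p : ℂ) ≠ 0 := Nat.cast_ne_zero.mpr (by omega)
  push_cast at hcount
  field_simp
  linear_combination hcount

open scoped Classical in
/-- For an odd prime `p ≠ 5` with `p ≢ 1 (mod 5)`, the number `M` of nonzero tuples in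
`F_p⁵` on the quintic `x₁⁵+x₂⁵+x₃⁵+x₄⁵+x₅⁵ = 5x₁x₂x₃x₄x₅` satisfies
`M = (p-1)(p³ + p² + p + 1) + 1 + (1/p) Σ_{χ ≠ ε} g(χ)⁵ g((χ⁵)⁻¹) (χ(-5))⁵`. -/
theorem card_quintic_not_one_mod_five (p : ℕ) [Fact p.Prime] (hp5 : p ≠ 5) (hp2 : Odd p)
    (hp : p % 5 ≠ 1) [Fintype (MulChar (ZMod p) ℂ)]
    (θ : AddChar (ZMod p) ℂ) (hθ : θ ≠ 1) :
    (Fintype.card {x : Fin 5 → ZMod p //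
        x ≠ 0 ∧ ∑ i, (x i) ^ 5 = 5 * ∏ i, x i} : ℂ) =
      ((p : ℂ) - 1) * ((p : ℂ) ^ 3 + (p : ℂ) ^ 2 + (p : ℂ) + 1) + 1 +
        (1 / (p : ℂ)) *
          ∑ χ ∈ Finset.univ.filter (fun χ : MulChar (ZMod p) ℂ => χ ≠ 1),
            gaussSum χ θ ^ 5 * gaussSum (χ ^ 5)⁻¹ θ * (χ (-5)) ^ 5 :=
  card_quintic_not_one_mod_five_general p hp5 hp θ hθ
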